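/- arXiv:2006.10032 — 3 statements merged into one kernel-verified Lean document; each statement's English description precedes it below -/
import Mathlib

section
/- For any a < 0, one has 1 + erf(a) > (2/√π)·exp(−a²)/(−a + √(a² + 2)), and consequently 1 + erf(a) ≥ exp(−a²)/(√π·(√2 − 2a)). -/
/-! Write `E x = exp (-x²)` and `s = √(x² + 2)`. By symmetry of `E` and `∫₀^∞ E = √π / 2`,
`1 + erf a = (2/√π) ∫_{-a}^∞ E`, so the first bound is the Gaussian tail estimate
`E b / (b + √(b² + 2)) < ∫_b^∞ E`, valid for every real `b`. It holds because
`x ↦ ∫_b^x E + E x / (x + s)` tends to `∫_b^∞ E` and is strictly increasing: its derivative is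
`E x (s - x)² / (2 s (x + s)) > 0`. The second bound follows from `√(a² + 2) ≤ √2 - a` for `a ≤ 0`. -/

open MeasureTheory Real Set

/-- The error function `erf t = (2/√π) ∫_0^t exp(−s²) ds`. -/
noncomputable def erf (t : ℝ) : ℝ :=
  (2 / Real.sqrt π) * ∫ s in (0:ℝ)..t, Real.exp (-s ^ 2)

open Filter Topology

theorem StrictMono.lt_of_tendsto_atTop {α β : Type*} [LinearOrder α] [NoMaxOrder α]
    [TopologicalSpace β] [Preorder β] [OrderClosedTopology β]
    {f : α → β} {l : β} (hf : StrictMono f) (hl : Tendsto f atTop (𝓝 l)) (b : α) : f b < l := by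
  obtain ⟨c, hbc⟩ := exists_gt b
  exact (hf hbc).trans_le (hf.monotone.ge_of_tendsto hl c)

lemma abs_lt_sqrt_sq_add_two (x : ℝ) : |x| < √(x ^ 2 + 2) :=
  (lt_sqrt (abs_nonneg x)).2 (by rw [sq_abs]; linarith)

lemma add_sqrt_sq_add_two_pos (x : ℝ) : 0 < x + √(x ^ 2 + 2) := by
  linarith [neg_abs_le x, abs_lt_sqrt_sq_add_two x]

lemma integrable_exp_neg_sq : Integrable fun s : ℝ => exp (-s ^ 2) := by
  simpa using integrable_exp_neg_mul_sq one_pos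

lemma one_add_erf_eq_integral_Ioi (a : ℝ) :
    1 + erf a = 2 / √π * ∫ s in Ioi (-a), exp (-s ^ 2) := by
  have hsymm (c : ℝ) : ∫ s in Ioi (-c), exp (-s ^ 2) = ∫ s in Iic c, exp (-s ^ 2) := by
    rw [← integral_comp_neg_Iic]
    simp only [neg_sq]
  have hhalf : ∫ s in Iic 0, exp (-s ^ 2) = √π / 2 := by
    simpa [← hsymm] using integral_gaussian_Ioi 1
  have hsplit : ∫ s in Iic a, exp (-s ^ 2) = √π / 2 + ∫ s in (0:ℝ)..a, exp (-s ^ 2) := by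
    rw [← hhalf, ← intervalIntegral.integral_Iic_sub_Iic integrable_exp_neg_sq.integrableOn
      integrable_exp_neg_sq.integrableOn]
    ring
  have hpi : √π ≠ 0 := (sqrt_pos.2 pi_pos).ne'
  rw [hsymm, hsplit, erf]
  field_simp

noncomputable def gaussTailLowerBound (x : ℝ) : ℝ := exp (-x ^ 2) / (x + √(x ^ 2 + 2))

lemma hasDerivAt_gaussTailLowerBound (x : ℝ) :
    HasDerivAt gaussTailLowerBound
      (-exp (-x ^ 2) * (2 * x + 1 / √(x ^ 2 + 2)) / (x + √(x ^ 2 + 2))) x := by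
  have hv := add_sqrt_sq_add_two_pos x
  have hE : HasDerivAt (fun y => exp (-y ^ 2)) (exp (-x ^ 2) * -(2 * x)) x := by
    simpa using (hasDerivAt_pow 2 x).fun_neg.exp
  have hsqrt : HasDerivAt (fun y => √(y ^ 2 + 2)) (2 * x / (2 * √(x ^ 2 + 2))) x := by
    simpa using ((hasDerivAt_pow 2 x).add_const 2).sqrt (by positivity)
  refine (hE.fun_div ((hasDerivAt_id' x).fun_add hsqrt) hv.ne').congr_deriv ?_
  field_simp
  ring

lemma exp_neg_sq_add_deriv_gaussTailLowerBound_pos (x : ℝ) :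
    0 < exp (-x ^ 2) + -exp (-x ^ 2) * (2 * x + 1 / √(x ^ 2 + 2)) / (x + √(x ^ 2 + 2)) := by
  set s := √(x ^ 2 + 2)
  have hs2 : s ^ 2 = x ^ 2 + 2 := sq_sqrt (by positivity)
  have hxs : |x| < s := abs_lt_sqrt_sq_add_two x
  have hs : 0 < s := (abs_nonneg x).trans_lt hxs
  have hv : 0 < x + s := add_sqrt_sq_add_two_pos x
  have key : 0 < s ^ 2 - x * s - 1 := by
    nlinarith [sq_pos_of_pos (sub_pos.2 ((le_abs_self x).trans_lt hxs))]
  have : exp (-x ^ 2) + -exp (-x ^ 2) * (2 * x + 1 / s) / (x + s)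
      = exp (-x ^ 2) * (s ^ 2 - x * s - 1) / (s * (x + s)) := by
    field_simp
    ring
  rw [this]
  positivity

lemma tendsto_gaussTailLowerBound_atTop : Tendsto gaussTailLowerBound atTop (𝓝 0) := by
  have hexp : Tendsto (fun x : ℝ => exp (-x ^ 2)) atTop (𝓝 0) :=
    tendsto_exp_atBot.comp (tendsto_neg_atTop_atBot.comp (tendsto_pow_atTop two_ne_zero))
  refine hexp.div_atTop (tendsto_atTop_mono (fun x => ?_) tendsto_id)
  simp [sqrt_nonneg]

theorem gaussTailLowerBound_lt_integral_Ioi (b : ℝ) :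
    gaussTailLowerBound b < ∫ s in Ioi b, exp (-s ^ 2) := by
  have hint (x : ℝ) : HasDerivAt (fun y => ∫ s in b..y, exp (-s ^ 2)) (exp (-x ^ 2)) x :=
    ((continuous_exp.comp (continuous_pow 2).neg).integral_hasStrictDerivAt b x).hasDerivAt
  set F := fun x => (∫ s in b..x, exp (-s ^ 2)) + gaussTailLowerBound x
  have hF : StrictMono F := strictMono_of_hasDerivAt_pos
    (fun x => (hint x).add (hasDerivAt_gaussTailLowerBound x))
    exp_neg_sq_add_deriv_gaussTailLowerBound_pos
  have hlim : Tendsto F atTop (𝓝 ((∫ s in Ioi b, exp (-s ^ 2)) + 0)) :=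
    (intervalIntegral_tendsto_integral_Ioi b integrable_exp_neg_sq.integrableOn tendsto_id).add
      tendsto_gaussTailLowerBound_atTop
  simpa [F] using hF.lt_of_tendsto_atTop hlim b

lemma neg_add_sqrt_sq_add_two_le (a : ℝ) (ha : a ≤ 0) :
    -a + √(a ^ 2 + 2) ≤ 2 * (√2 - 2 * a) := by
  have h2 : √2 ^ 2 = 2 := sq_sqrt zero_le_two
  have hle : √(a ^ 2 + 2) ≤ √2 - a :=
    (sqrt_le_left (by linarith [sqrt_nonneg 2])).2 (by nlinarith [sqrt_nonneg 2])
  linarith [sqrt_nonneg 2]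

/-- For `a < 0`: `1 + erf a > (2/√π)·exp(−a²)/(−a + √(a²+2))`, and consequently
`1 + erf a ≥ exp(−a²)/(√π (√2 − 2a))`. -/
theorem one_add_erf_lower_bound (a : ℝ) (ha : a < 0) :
    (2 / Real.sqrt π) * Real.exp (-a ^ 2) / (-a + Real.sqrt (a ^ 2 + 2)) < 1 + erf a ∧
    Real.exp (-a ^ 2) / (Real.sqrt π * (Real.sqrt 2 - 2 * a)) ≤ 1 + erf a := by
  have hfirst : 2 / √π * exp (-a ^ 2) / (-a + √(a ^ 2 + 2)) < 1 + erf a :=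
    calc 2 / √π * exp (-a ^ 2) / (-a + √(a ^ 2 + 2)) = 2 / √π * gaussTailLowerBound (-a) := by
          rw [gaussTailLowerBound, neg_sq, mul_div_assoc]
      _ < 2 / √π * ∫ s in Ioi (-a), exp (-s ^ 2) := by
          gcongr
          exact gaussTailLowerBound_lt_integral_Ioi (-a)
      _ = 1 + erf a := (one_add_erf_eq_integral_Ioi a).symm
  refine ⟨hfirst, le_trans ?_ hfirst.le⟩
  calc exp (-a ^ 2) / (√π * (√2 - 2 * a)) = 2 / √π * exp (-a ^ 2) / (2 * (√2 - 2 * a)) := by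
        field_simp
    _ ≤ 2 / √π * exp (-a ^ 2) / (-a + √(a ^ 2 + 2)) := by
        gcongr
        · linarith [sqrt_nonneg (a ^ 2 + 2)]
        · exact neg_add_sqrt_sq_add_two_le a ha.le
end

section
/- Let ℓ(t) = exp(−|t|) and define g_σ(μ) = E_{z ∼ N(μ, σ²)}[ℓ(z)]. Then for 0 < σ ≤ 1 and all μ ∈ ℝ, g_σ(μ) ≥ 0.25·ℓ(μ). -/
open MeasureTheory ProbabilityTheory Real

/-- `g σ μ = E_{z ∼ N(μ, σ²)}[exp(−|z|)]`. -/
noncomputable def gConv (σ μ : ℝ) : ℝ :=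
  ∫ z, Real.exp (-|z|) ∂(gaussianReal μ (σ ^ 2).toNNReal)

/-!
By Jensen's inequality for the convex function `exp`, `E[exp(-|X|)] ≥ exp(-E|X|)`, and for
`X ∼ N(μ, σ²)` the first absolute moment satisfies `E|X| ≤ |μ| + E|X - μ| ≤ |μ| + σ`.
Hence `g_σ(μ) ≥ e^{-σ} ℓ(μ) ≥ e^{-1} ℓ(μ)`, and `e^{-1} > 0.25`.
-/

section Jensen

variable {α : Type*} [MeasurableSpace α] {P : Measure α} [IsProbabilityMeasure P]

theorem exp_integral_le_integral_exp {f : α → ℝ} (hf : Integrable f P)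
    (hexp : Integrable (fun x ↦ exp (f x)) P) : exp (∫ x, f x ∂P) ≤ ∫ x, exp (f x) ∂P :=
  convexOn_exp.map_integral_le continuousOn_exp isClosed_univ (by simp) hf hexp

theorem integral_abs_sub_integral_le_sqrt_variance {X : α → ℝ} (hX : MemLp X 2 P) :
    ∫ ω, |X ω - P[X]| ∂P ≤ √(Var[X; P]) := by
  have hY_abs : MemLp (fun ω ↦ |X ω - P[X]|) 2 P := (hX.sub (memLp_const _)).abs
  rw [le_sqrt (integral_nonneg fun _ ↦ abs_nonneg _) (variance_nonneg X P),
    variance_eq_integral hX.aemeasurable]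
  calc (∫ ω, |X ω - P[X]| ∂P) ^ 2 ≤ ∫ ω, |X ω - P[X]| ^ 2 ∂P :=
        (convexOn_pow 2).map_integral_le (continuous_pow 2).continuousOn isClosed_Ici
          (ae_of_all _ fun _ ↦ Set.mem_Ici.mpr (abs_nonneg _)) (hY_abs.integrable one_le_two)
          hY_abs.integrable_sq
    _ = ∫ ω, (X ω - P[X]) ^ 2 ∂P := by simp only [sq_abs]

end Jensen

theorem integral_abs_gaussianReal_le (μ : ℝ) (v : NNReal) :
    ∫ x, |x| ∂gaussianReal μ v ≤ |μ| + √v := by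
  have hid : MemLp id 2 (gaussianReal μ v) := memLp_id_gaussianReal 2
  have hcentral := integral_abs_sub_integral_le_sqrt_variance hid
  simp only [id_eq, integral_id_gaussianReal, variance_id_gaussianReal] at hcentral
  have hint : Integrable id (gaussianReal μ v) := hid.integrable one_le_two
  have hint_sub : Integrable (fun x ↦ |x - μ|) (gaussianReal μ v) :=
    (hint.sub (integrable_const μ)).abs
  calc ∫ x, |x| ∂gaussianReal μ v ≤ ∫ x, (|μ| + |x - μ|) ∂gaussianReal μ v := by
        refine integral_mono hint.abs ((integrable_const _).add hint_sub) fun x ↦ ?_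
        linarith [abs_sub_abs_le_abs_sub x μ]
    _ ≤ |μ| + √v := by
        rw [integral_add (integrable_const _) hint_sub, integral_const, probReal_univ, one_smul]
        linarith

theorem exp_neg_le_integral_exp_neg_abs_gaussianReal (μ : ℝ) (v : NNReal) :
    exp (-(|μ| + √v)) ≤ ∫ x, exp (-|x|) ∂gaussianReal μ v := by
  have hint : Integrable (fun x ↦ -|x|) (gaussianReal μ v) :=
    ((memLp_id_gaussianReal 1).integrable le_rfl).abs.neg
  calc exp (-(|μ| + √v)) ≤ exp (∫ x, -|x| ∂gaussianReal μ v) := by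
        rw [integral_neg, exp_le_exp, neg_le_neg_iff]
        exact integral_abs_gaussianReal_le μ v
    _ ≤ ∫ x, exp (-|x|) ∂gaussianReal μ v :=
        exp_integral_le_integral_exp hint ((integrable_const 1).mono' (by fun_prop)
          (ae_of_all _ fun x ↦ by simp [abs_of_pos (exp_pos _)]))

/-- For `0 < σ ≤ 1`, the Gaussian smoothing of `ℓ(t) = exp(−|t|)` satisfies
`g_σ(μ) ≥ 0.25 ℓ(μ)`. -/
theorem gaussian_smoothed_loss_lower_bound (σ μ : ℝ) (hσ0 : 0 < σ) (hσ1 : σ ≤ 1) :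
    0.25 * Real.exp (-|μ|) ≤ gConv σ μ := by
  have hsqrt : √((σ ^ 2).toNNReal : ℝ) = σ := by
    rw [Real.coe_toNNReal _ (sq_nonneg σ), sqrt_sq hσ0.le]
  have hlower := exp_neg_le_integral_exp_neg_abs_gaussianReal μ (σ ^ 2).toNNReal
  rw [hsqrt] at hlower
  calc 0.25 * exp (-|μ|) ≤ exp (-1) * exp (-|μ|) := by
        gcongr
        linarith [exp_neg_one_gt_d9]
    _ ≤ exp (-(|μ| + σ)) := by
        rw [← exp_add, exp_le_exp]
        linarith
    _ ≤ gConv σ μ := hlower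
end

section
/- Let ℓ(t) = exp(−|t|), g_σ(μ) = E_{z ∼ N(μ, σ²)}[ℓ(z)], and q_σ(μ) = ∂g_σ(μ)/∂σ. Then for all σ > 0 and all μ ∈ ℝ, q_σ(μ) ≥ −√(2/π)·exp(−μ²/(2σ²)). -/
/-!
With `u` standard normal (density `φ`) and `ℓ(z) = exp (-|z|)`, `g_σ(μ) = E[ℓ(σu + μ)]`.
Since `ℓ` is `1`-Lipschitz and differentiable off the null set `u = a := -μ/σ`,
differentiating under the integral gives `q = E[u ℓ'(σu + μ)]`. For `u ≤ a` the integrand is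
`φ(u) u e^{σu+μ}` and for `u > a` it is `-φ(u) u e^{-(σu+μ)}`; replacing the factor `u` by
`u - σ`, resp. `u + σ`, lowers it by `σ φ(u) e^{-|σu+μ|} ≥ 0`. By the Gaussian tilt
`φ(u) e^{±σu} ∝ φ(u ∓ σ)` the new integrand is an exact derivative on each half-line,
contributing exactly `-φ(a)` there. So `q ≥ -2φ(μ/σ) = -√(2/π) exp(-μ²/(2σ²))`;
the dropped terms add up to `σ g_σ(μ)`.
-/

open MeasureTheory ProbabilityTheory Real

open Set Filter
open scoped NNReal Topology

namespace ProbabilityTheory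

lemma hasDerivAt_gaussianPDFReal (m : ℝ) (v : ℝ≥0) (x : ℝ) :
    HasDerivAt (gaussianPDFReal m v) (-((x - m) / v) * gaussianPDFReal m v x) x := by
  have h : HasDerivAt (fun x => -(x - m) ^ 2 / (2 * v)) (-((x - m) / v)) x :=
    ((((hasDerivAt_id' x).sub_const m).pow 2).neg.div_const (2 * (v : ℝ))).congr_deriv
      (by field_simp; ring)
  exact (h.exp.const_mul _).congr_deriv (by rw [gaussianPDFReal]; ring)

lemma gaussianPDFReal_mul_exp (m : ℝ) {v : ℝ≥0} (hv : v ≠ 0) (s t x : ℝ) :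
    gaussianPDFReal m v x * exp (s * x + t) =
      exp (s * m + v * s ^ 2 / 2 + t) * gaussianPDFReal (m + v * s) v x := by
  have h : -(x - m) ^ 2 / (2 * v) + (s * x + t) =
      -(x - (m + v * s)) ^ 2 / (2 * v) + (s * m + v * s ^ 2 / 2 + t) := by
    field_simp
    ring
  simp only [gaussianPDFReal]
  rw [mul_assoc, ← exp_add, h, exp_add]
  ring

lemma integrable_sub_mul_gaussianPDFReal (m : ℝ) {v : ℝ≥0} (hv : v ≠ 0) :
    Integrable (fun x => (x - m) * gaussianPDFReal m v x) := by
  have hb : 0 < (2 * (v : ℝ))⁻¹ := by positivity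
  refine (((integrable_mul_exp_neg_mul_sq hb).comp_sub_right m).const_mul
    (√(2 * π * v))⁻¹).congr (ae_of_all _ fun x => ?_)
  simp only [gaussianPDFReal]
  rw [neg_div, div_eq_inv_mul, neg_mul]
  ring

lemma hasDerivAt_neg_mul_gaussianPDFReal (m : ℝ) {v : ℝ≥0} (hv : v ≠ 0) (x : ℝ) :
    HasDerivAt (fun x => -(v * gaussianPDFReal m v x)) ((x - m) * gaussianPDFReal m v x) x := by
  refine ((hasDerivAt_gaussianPDFReal m v x).const_mul (v : ℝ)).neg.congr_deriv ?_
  have : (v : ℝ) ≠ 0 := by exact_mod_cast hv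
  field_simp

lemma integral_Iic_sub_mul_gaussianPDFReal (m : ℝ) {v : ℝ≥0} (hv : v ≠ 0) (a : ℝ) :
    ∫ x in Iic a, (x - m) * gaussianPDFReal m v x = -(v * gaussianPDFReal m v a) := by
  have hderiv := hasDerivAt_neg_mul_gaussianPDFReal m hv
  have hint := integrable_sub_mul_gaussianPDFReal m hv
  have hlim : Tendsto (fun x => -(v * gaussianPDFReal m v x)) atBot (𝓝 0) :=
    tendsto_zero_of_hasDerivAt_of_integrableOn_Iic (a := 0) (fun x _ => hderiv x)
      hint.integrableOn ((integrable_gaussianPDFReal m v).const_mul _).neg.integrableOn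
  rw [integral_Iic_of_hasDerivAt_of_tendsto' (fun x _ => hderiv x) hint.integrableOn hlim,
    sub_zero]

lemma integral_Ioi_sub_mul_gaussianPDFReal (m : ℝ) {v : ℝ≥0} (hv : v ≠ 0) (a : ℝ) :
    ∫ x in Ioi a, (x - m) * gaussianPDFReal m v x = v * gaussianPDFReal m v a := by
  have hderiv := hasDerivAt_neg_mul_gaussianPDFReal m hv
  have hint := integrable_sub_mul_gaussianPDFReal m hv
  have hlim : Tendsto (fun x => -(v * gaussianPDFReal m v x)) atTop (𝓝 0) :=
    tendsto_zero_of_hasDerivAt_of_integrableOn_Ioi (a := 0) (fun x _ => hderiv x)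
      hint.integrableOn ((integrable_gaussianPDFReal m v).const_mul _).neg.integrableOn
  rw [integral_Ioi_of_hasDerivAt_of_tendsto' (fun x _ => hderiv x) hint.integrableOn hlim,
    zero_sub, neg_neg]

lemma integrable_sub_mul_gaussianPDFReal_mul_exp (m : ℝ) {v : ℝ≥0} (hv : v ≠ 0)
    (s t : ℝ) :
    Integrable (fun x => (x - (m + v * s)) * (gaussianPDFReal m v x * exp (s * x + t))) := by
  refine ((integrable_sub_mul_gaussianPDFReal (m + v * s) hv).const_mul
    (exp (s * m + v * s ^ 2 / 2 + t))).congr (ae_of_all _ fun x => ?_)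
  simp only [gaussianPDFReal_mul_exp m hv]
  ring

lemma integral_Iic_sub_mul_gaussianPDFReal_mul_exp (m : ℝ) {v : ℝ≥0} (hv : v ≠ 0)
    (s t a : ℝ) :
    ∫ x in Iic a, (x - (m + v * s)) * (gaussianPDFReal m v x * exp (s * x + t)) =
      -(v * (gaussianPDFReal m v a * exp (s * a + t))) := by
  simp_rw [gaussianPDFReal_mul_exp m hv, mul_left_comm _ (exp _), integral_const_mul,
    integral_Iic_sub_mul_gaussianPDFReal _ hv]
  ring

lemma integral_Ioi_sub_mul_gaussianPDFReal_mul_exp (m : ℝ) {v : ℝ≥0} (hv : v ≠ 0)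
    (s t a : ℝ) :
    ∫ x in Ioi a, (x - (m + v * s)) * (gaussianPDFReal m v x * exp (s * x + t)) =
      v * (gaussianPDFReal m v a * exp (s * a + t)) := by
  simp_rw [gaussianPDFReal_mul_exp m hv, mul_left_comm _ (exp _), integral_const_mul,
    integral_Ioi_sub_mul_gaussianPDFReal _ hv]

end ProbabilityTheory

-- At the kink `x = 0` this takes the left derivative `1` of `exp (-|x|)`.
noncomputable def expNegAbsDeriv (x : ℝ) : ℝ := if x ≤ 0 then exp x else -exp (-x)

@[fun_prop]
lemma measurable_expNegAbsDeriv : Measurable expNegAbsDeriv :=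
  Measurable.ite measurableSet_Iic measurable_exp (measurable_exp.comp measurable_neg).neg

lemma abs_expNegAbsDeriv_le_one (x : ℝ) : |expNegAbsDeriv x| ≤ 1 := by
  unfold expNegAbsDeriv
  split_ifs with hx
  · rw [abs_of_pos (exp_pos x)]; exact exp_le_one_iff.2 hx
  · rw [abs_neg, abs_of_pos (exp_pos _)]; exact exp_le_one_iff.2 (by linarith)

lemma hasDerivAt_exp_neg_abs {x : ℝ} (hx : x ≠ 0) :
    HasDerivAt (fun x => exp (-|x|)) (expNegAbsDeriv x) x := by
  rcases hx.lt_or_gt with hx | hx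
  · simpa [expNegAbsDeriv, hx.le, abs_of_neg hx] using (hasDerivAt_abs_neg hx).neg.exp
  · simpa [expNegAbsDeriv, hx.not_ge, abs_of_pos hx] using (hasDerivAt_abs_pos hx).neg.exp

lemma lipschitzWith_exp_neg_abs : LipschitzWith 1 fun x : ℝ => exp (-|x|) := by
  have hexp : LipschitzOnWith 1 exp (Iic 0) :=
    (convex_Iic 0).lipschitzOnWith_of_nnnorm_hasDerivWithin_le
      (fun x _ => (hasDerivAt_exp x).hasDerivWithinAt) fun x hx => by
        rw [← NNReal.coe_le_coe, coe_nnnorm, norm_of_nonneg (exp_pos x).le]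
        exact exp_le_one_iff.2 hx
  refine LipschitzWith.of_dist_le_mul fun x y => ?_
  calc dist (exp (-|x|)) (exp (-|y|)) ≤ 1 * dist (-|x|) (-|y|) :=
        hexp.dist_le_mul _ (by simp) _ (by simp)
    _ ≤ 1 * dist x y := by
        rw [one_mul, one_mul, dist_neg_neg, Real.dist_eq, Real.dist_eq]
        exact abs_abs_sub_abs_le_abs_sub x y

lemma hasDerivAt_integral_exp_neg_abs_mul_add {ν : Measure ℝ} [IsFiniteMeasure ν]
    [NullSingletonClass ν] (hν : Integrable id ν) {σ : ℝ} (hσ : σ ≠ 0) (μ : ℝ) :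
    HasDerivAt (fun s => ∫ u, exp (-|s * u + μ|) ∂ν)
      (∫ u, u * expNegAbsDeriv (σ * u + μ) ∂ν) σ := by
  have hdiff : ∀ᵐ u ∂ν, HasDerivAt (fun s => exp (-|s * u + μ|))
      (u * expNegAbsDeriv (σ * u + μ)) σ := by
    filter_upwards [compl_mem_ae_iff.2 (measure_singleton (μ := ν) (-μ / σ))] with u hu
    have hne : σ * u + μ ≠ 0 := fun h => hu ((eq_div_iff hσ).2 (by linarith))
    exact ((hasDerivAt_exp_neg_abs hne).comp σ
      ((hasDerivAt_mul_const u).add_const μ)).congr_deriv (mul_comm _ _)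
  have hlip (u : ℝ) : LipschitzWith (Real.nnabs u) fun s => exp (-|s * u + μ|) := by
    have hlin : LipschitzWith (Real.nnabs u) fun s => s * u + μ :=
      LipschitzWith.of_dist_le_mul fun s t => by
        rw [Real.dist_eq, Real.dist_eq, add_sub_add_right_eq_sub, ← sub_mul, abs_mul, mul_comm,
          Real.coe_nnabs]
    simpa [Function.comp_def] using lipschitzWith_exp_neg_abs.comp hlin
  refine (hasDerivAt_integral_of_dominated_loc_of_lip (Metric.ball_mem_nhds σ one_pos)
    (Eventually.of_forall fun s => by fun_prop)
    (Integrable.of_bound (by fun_prop) 1 (ae_of_all _ fun u => ?_))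
    (by fun_prop) (ae_of_all _ fun u => (hlip u).lipschitzOnWith) hν hdiff).2
  simp

lemma gConv_eq_integral_gaussianReal_zero_one (s μ : ℝ) :
    gConv s μ = ∫ u, exp (-|s * u + μ|) ∂gaussianReal 0 1 := by
  have hmap : (gaussianReal 0 1).map (fun u => s * u + μ) = gaussianReal μ (s ^ 2).toNNReal := by
    change (gaussianReal 0 1).map ((· + μ) ∘ (s * ·)) = _
    rw [← Measure.map_map (measurable_add_const μ) (measurable_const_mul s),
      gaussianReal_map_const_mul, gaussianReal_map_add_const]
    congr 1
    · ring
    · ext; simp [Real.coe_toNNReal _ (sq_nonneg s)]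
  rw [gConv, ← hmap, integral_map (by fun_prop) (by fun_prop)]

lemma hasDerivAt_gConv {σ : ℝ} (hσ : σ ≠ 0) (μ : ℝ) :
    HasDerivAt (fun s => gConv s μ)
      (∫ u, u * expNegAbsDeriv (σ * u + μ) ∂gaussianReal 0 1) σ := by
  have := nullSingletonClass_gaussianReal (μ := 0) one_ne_zero
  simpa only [gConv_eq_integral_gaussianReal_zero_one] using
    hasDerivAt_integral_exp_neg_abs_mul_add ((memLp_id_gaussianReal 1).integrable le_rfl) hσ μ

lemma two_mul_gaussianPDFReal_zero_one (x : ℝ) :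
    2 * gaussianPDFReal 0 1 x = √(2 / π) * exp (-x ^ 2 / 2) := by
  have h2 : √(2 : ℝ) ≠ 0 := by positivity
  simp only [gaussianPDFReal, NNReal.coe_one, mul_one, sub_zero]
  rw [sqrt_div' _ pi_pos.le, sqrt_mul zero_le_two]
  field_simp
  rw [sq_sqrt zero_le_two]

lemma integrable_gaussianPDFReal_mul_expNegAbsDeriv (σ μ : ℝ) :
    Integrable fun u => gaussianPDFReal 0 1 u * (u * expNegAbsDeriv (σ * u + μ)) := by
  refine (integrable_sub_mul_gaussianPDFReal 0 one_ne_zero).norm.mono' (by fun_prop)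
    (ae_of_all _ fun u => ?_)
  calc ‖gaussianPDFReal 0 1 u * (u * expNegAbsDeriv (σ * u + μ))‖
      = ‖(u - 0) * gaussianPDFReal 0 1 u‖ * |expNegAbsDeriv (σ * u + μ)| := by
        simp only [norm_mul, sub_zero, Real.norm_eq_abs]
        ring
    _ ≤ ‖(u - 0) * gaussianPDFReal 0 1 u‖ :=
        mul_le_of_le_one_right (norm_nonneg _) (abs_expNegAbsDeriv_le_one _)

lemma neg_gaussianPDFReal_le_setIntegral_Iic {σ μ a : ℝ} (hσ : 0 ≤ σ)
    (ha : σ * a + μ = 0) :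
    -gaussianPDFReal 0 1 a ≤
      ∫ u in Iic a, gaussianPDFReal 0 1 u * (u * expNegAbsDeriv (σ * u + μ)) := by
  have h := integral_Iic_sub_mul_gaussianPDFReal_mul_exp 0 one_ne_zero σ μ a
  have hint := integrable_sub_mul_gaussianPDFReal_mul_exp 0 one_ne_zero σ μ
  simp only [zero_add, NNReal.coe_one, one_mul, ha, exp_zero, mul_one] at h hint
  rw [← h]
  refine setIntegral_mono_on hint.integrableOn
    (integrable_gaussianPDFReal_mul_expNegAbsDeriv σ μ).integrableOn measurableSet_Iic
    fun u hu => ?_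
  have hneg : σ * u + μ ≤ 0 := by linarith [mul_le_mul_of_nonneg_left (mem_Iic.1 hu) hσ]
  rw [expNegAbsDeriv, if_pos hneg]
  linarith [mul_nonneg (mul_nonneg (gaussianPDFReal_nonneg 0 1 u) (exp_pos (σ * u + μ)).le) hσ]

lemma neg_gaussianPDFReal_le_setIntegral_Ioi {σ μ a : ℝ} (hσ : 0 < σ) (ha : σ * a + μ = 0) :
    -gaussianPDFReal 0 1 a ≤
      ∫ u in Ioi a, gaussianPDFReal 0 1 u * (u * expNegAbsDeriv (σ * u + μ)) := by
  have h := integral_Ioi_sub_mul_gaussianPDFReal_mul_exp 0 one_ne_zero (-σ) (-μ) a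
  have hint := integrable_sub_mul_gaussianPDFReal_mul_exp 0 one_ne_zero (-σ) (-μ)
  rw [show -σ * a + -μ = 0 by linarith] at h
  simp only [zero_add, NNReal.coe_one, one_mul, exp_zero, mul_one] at h hint
  rw [← h, ← integral_neg]
  refine setIntegral_mono_on hint.neg.integrableOn
    (integrable_gaussianPDFReal_mul_expNegAbsDeriv σ μ).integrableOn measurableSet_Ioi
    fun u hu => ?_
  have hpos : ¬σ * u + μ ≤ 0 := by linarith [mul_lt_mul_of_pos_left (mem_Ioi.1 hu) hσ]
  rw [expNegAbsDeriv, if_neg hpos, show -σ * u + -μ = -(σ * u + μ) by ring]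
  linarith [mul_nonneg (mul_nonneg (gaussianPDFReal_nonneg 0 1 u) (exp_pos (-(σ * u + μ))).le)
    hσ.le]

lemma neg_two_mul_gaussianPDFReal_le_integral {σ : ℝ} (hσ : 0 < σ) (μ : ℝ) :
    -(2 * gaussianPDFReal 0 1 (-μ / σ)) ≤
      ∫ u, u * expNegAbsDeriv (σ * u + μ) ∂gaussianReal 0 1 := by
  have ha : σ * (-μ / σ) + μ = 0 := by field_simp; ring
  have hint := integrable_gaussianPDFReal_mul_expNegAbsDeriv σ μ
  rw [integral_gaussianReal_eq_integral_smul one_ne_zero]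
  simp only [smul_eq_mul]
  rw [← intervalIntegral.integral_Iic_add_Ioi hint.integrableOn hint.integrableOn, two_mul,
    neg_add]
  exact add_le_add (neg_gaussianPDFReal_le_setIntegral_Iic hσ.le ha)
    (neg_gaussianPDFReal_le_setIntegral_Ioi hσ ha)

/-- The derivative `q_σ(μ) = ∂g_σ(μ)/∂σ` satisfies
`q_σ(μ) ≥ −√(2/π)·exp(−μ²/(2σ²))` for all `σ > 0` and `μ`. -/
theorem deriv_gaussian_smoothed_loss_lower_bound (σ μ q : ℝ) (hσ : 0 < σ)
    (hq : HasDerivAt (fun s => gConv s μ) q σ) :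
    -Real.sqrt (2 / π) * Real.exp (-μ ^ 2 / (2 * σ ^ 2)) ≤ q := by
  rw [hq.unique (hasDerivAt_gConv hσ.ne' μ)]
  calc -Real.sqrt (2 / π) * Real.exp (-μ ^ 2 / (2 * σ ^ 2))
      = -(2 * gaussianPDFReal 0 1 (-μ / σ)) := by
        rw [two_mul_gaussianPDFReal_zero_one, div_pow, neg_sq]
        field_simp
    _ ≤ _ := neg_two_mul_gaussianPDFReal_le_integral hσ μ
end
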